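/- Proposition (law of the system disturbance, equation (eqnytu)): For a non-controllable FSC with a source in 𝒫_v(u,u) (0 ≤ u ≤ v), let t satisfy u+1 ≤ t ≤ N and let y^{t-u-1} be an output history with Pr(Y^{t-u-1} = y^{t-u-1}) > 0. Then for every y ∈ 𝒴: Pr(Y_{t-u} = y | Y^{t-u-1} = y^{t-u-1}) = Σ_{x_{t-v}^t, s_{t-v-1}^{t-u}} α_{t-1}(x_{t-v}^{t-1}, s_{t-v-1}^{t-u-1}) · π_t(x_t | x_{t-v}^{t-1}, s_{t-v-1}^{t-u-1}, y^{t-u-1}) · W(y, s_{t-u} | x_{t-u}, s_{t-u-1}) (windows truncated for small indices). In particular, the conditional law of Y_{t-u} given the past outputs is determined by the a posteriori vector α_{t-1}, the time-t policy, and the channel law alone. -/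

import Mathlib

/-!
Common framework: finite-state channels (FSCs), non-controllable FSCs,
sources with delayed feedback (FB) and delayed state information (SI),
induced joint pmfs, conditional probabilities and conditional mutual
information, following Huang–Kavčić–Ma, "Upper Bounds on the Capacities of
Non-Controllable Finite-State Channels with/without Feedback".

Time convention: for a horizon `N`, the channel inputs are `X_1,…,X_N`
(coordinate `x i` of `x : Fin N → X` is `X_{i+1}`), the states are
`S_0,…,S_N` (coordinate `s j` of `s : Fin (N+1) → S` is `S_j`), and the
outputs are `Y_1,…,Y_N` (coordinate `y i` is `Y_{i+1}`).
-/

open Finset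

noncomputable section

namespace FSCPaper

/-- Probability of an event under a pmf `p` on a finite sample space. -/
def prE {Ω : Type} [Fintype Ω] (p : Ω → ℝ) (E : Set Ω) : ℝ :=
  ∑ ω : Ω, E.indicator p ω

/-- Conditional probability `Pr(E | F)`, a ratio of (sums of) marginals
(with the `0/0 = 0` junk-value convention of real division). -/
def condPr {Ω : Type} [Fintype Ω] (p : Ω → ℝ) (E F : Set Ω) : ℝ :=
  prE p (E ∩ F) / prE p F

/-- The conditional pmf `Pr(· | F)` given an event `F`. -/
def condPMF {Ω : Type} [Fintype Ω] (p : Ω → ℝ) (F : Set Ω) : Ω → ℝ :=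
  fun ω => F.indicator p ω / prE p F

/-- Conditional mutual information `I(A;B|C)` of finite-valued random
variables `fA, fB, fC` under the pmf `p`; zero-probability terms
contribute `0` (the factor in front of the logarithm vanishes). -/
def condMI {Ω A B C : Type} [Fintype Ω] [Fintype A] [Fintype B] [Fintype C]
    (p : Ω → ℝ) (fA : Ω → A) (fB : Ω → B) (fC : Ω → C) : ℝ :=
  ∑ a : A, ∑ b : B, ∑ c : C,
    prE p {ω | fA ω = a ∧ fB ω = b ∧ fC ω = c} *
      Real.log (condPr p {ω | fA ω = a ∧ fB ω = b} {ω | fC ω = c} /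
        (condPr p {ω | fA ω = a} {ω | fC ω = c} *
          condPr p {ω | fB ω = b} {ω | fC ω = c}))

/-- Trajectories `(x_1^N, s_0^N, y_1^N)`. -/
abbrev Traj (X S Y : Type) (N : ℕ) : Type :=
  (Fin N → X) × (Fin (N + 1) → S) × (Fin N → Y)

/-- A general finite-state channel: channel transition kernel
`W(y, s' | x, s)` (a pmf on `Y × S` for each `(x,s)`) and initial state
pmf `init`. -/
structure FSC (X S Y : Type) [Fintype S] [Fintype Y] : Type where
  W : Y → S → X → S → ℝ
  init : S → ℝ
  W_nonneg : ∀ y s' x s, 0 ≤ W y s' x s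
  W_sum : ∀ x s, (∑ y : Y, ∑ s' : S, W y s' x s) = 1
  init_nonneg : ∀ s, 0 ≤ init s
  init_sum : (∑ s : S, init s) = 1

/-- A source without feedback: conditional pmfs `π_t(x_t | x^{t-1})`;
`pol t x a` is the probability that `X_{t+1} = a` given that the previous
inputs are the corresponding coordinates of `x` (by `causal` it depends
only on the coordinates `x j` with `j < t`). -/
structure FFSource (X : Type) [Fintype X] (N : ℕ) : Type where
  pol : Fin N → (Fin N → X) → X → ℝ
  nonneg : ∀ t x a, 0 ≤ pol t x a
  sum_one : ∀ t x, (∑ a : X, pol t x a) = 1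
  causal : ∀ (t : Fin N) (x x' : Fin N → X),
    (∀ j : Fin N, (j : ℕ) < (t : ℕ) → x j = x' j) → pol t x = pol t x'

/-- A non-controllable finite-state channel: output kernel `P(y|x,s)`,
free state-transition kernel `Q(s'|s)`, and initial state pmf `init`. -/
structure NCFSC (X S Y : Type) [Fintype S] [Fintype Y] : Type where
  P : Y → X → S → ℝ
  Q : S → S → ℝ
  init : S → ℝ
  P_nonneg : ∀ y x s, 0 ≤ P y x s
  P_sum : ∀ x s, (∑ y : Y, P y x s) = 1
  Q_nonneg : ∀ s' s, 0 ≤ Q s' s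
  Q_sum : ∀ s, (∑ s' : S, Q s' s) = 1
  init_nonneg : ∀ s, 0 ≤ init s
  init_sum : (∑ s : S, init s) = 1

/-- A source with `u`-delayed feedback and `u`-delayed state information
(the set `𝒫(u,u)`): `pol t x s y a` is
`π_{t+1}(a | x^{t}, s_0^{t-u}, y^{t-u})` in 1-based time; by `causal` it
depends on `(x, s, y)` only through the coordinates
`x_1^{t}` (indices `j < t`), `s_0^{t-u}` (indices `j + u ≤ t`) and
`y_1^{t-u}` (indices `j + u + 1 ≤ t`), i.e. on the past inputs, the
`u`-delayed state information and the `u`-delayed output feedback. -/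
structure Source (X S Y : Type) [Fintype X] [Fintype S] [Fintype Y] (N u : ℕ) : Type where
  pol : Fin N → (Fin N → X) → (Fin (N + 1) → S) → (Fin N → Y) → X → ℝ
  nonneg : ∀ t x s y a, 0 ≤ pol t x s y a
  sum_one : ∀ t x s y, (∑ a : X, pol t x s y a) = 1
  causal : ∀ (t : Fin N) (x x' : Fin N → X) (s s' : Fin (N + 1) → S) (y y' : Fin N → Y),
    (∀ j : Fin N, (j : ℕ) < (t : ℕ) → x j = x' j) →
    (∀ j : Fin (N + 1), (j : ℕ) + u ≤ (t : ℕ) → s j = s' j) →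
    (∀ j : Fin N, (j : ℕ) + u + 1 ≤ (t : ℕ) → y j = y' j) →
    pol t x s y = pol t x' s' y'

variable {X S Y : Type} [Fintype X] [Fintype S] [Fintype Y]

/-- Joint pmf induced by a general FSC and a feedforward source:
`Pr(x^N, s_0^N, y^N) = μ(s_0) ∏_t π_t(x_t|x^{t-1}) W(y_t, s_t | x_t, s_{t-1})`. -/
def jointP0 {N : ℕ} (ch : FSC X S Y) (src : FFSource X N) (ω : Traj X S Y N) : ℝ :=
  ch.init (ω.2.1 0) *
    ∏ i : Fin N,
      src.pol i ω.1 (ω.1 i) *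
        ch.W (ω.2.2 i) (ω.2.1 i.succ) (ω.1 i) (ω.2.1 i.castSucc)

/-- Joint channel transition `W(y, s' | x, s) = P(y|x,s) · Q(s'|s)` of a
non-controllable FSC. -/
def NCFSC.W (ch : NCFSC X S Y) (y : Y) (s' : S) (x : X) (s : S) : ℝ :=
  ch.P y x s * ch.Q s' s

/-- Joint pmf induced by a non-controllable FSC and a source in `𝒫(u,u)`:
`Pr(x^N, s_0^N, y^N) = μ(s_0) ∏_t π_t(x_t|x^{t-1},s_0^{t-u-1},y^{t-u-1}) W(y_t,s_t|x_t,s_{t-1})`. -/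
def jointP {N u : ℕ} (ch : NCFSC X S Y) (src : Source X S Y N u) (ω : Traj X S Y N) : ℝ :=
  ch.init (ω.2.1 0) *
    ∏ i : Fin N,
      src.pol i ω.1 ω.2.1 ω.2.2 (ω.1 i) *
        ch.W (ω.2.2 i) (ω.2.1 i.succ) (ω.1 i) (ω.2.1 i.castSucc)

/-- A source in `𝒫(u,u)` is a `v`-th order conditional Markov source
(the set `𝒫_v(u,u)`) if each policy depends on its arguments only through
`(x_{t-v}^{t-1}, s_{t-v-1}^{t-u-1}, y^{t-u-1})` (windows truncated for
small `t`). -/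
def IsMarkov {N u : ℕ} (v : ℕ) (src : Source X S Y N u) : Prop :=
  ∀ (t : Fin N) (x x' : Fin N → X) (s s' : Fin (N + 1) → S) (y y' : Fin N → Y),
    (∀ j : Fin N, (t : ℕ) ≤ (j : ℕ) + v ∧ (j : ℕ) < (t : ℕ) → x j = x' j) →
    (∀ j : Fin (N + 1), (t : ℕ) ≤ (j : ℕ) + v ∧ (j : ℕ) + u ≤ (t : ℕ) → s j = s' j) →
    (∀ j : Fin N, (j : ℕ) + u + 1 ≤ (t : ℕ) → y j = y' j) →
    src.pol t x s y = src.pol t x' s' y'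

/-- `Σ_{t=1}^N I(X^t, S_0^{t-v-1}; Y_t | Y^{t-1})` under the joint law of
the source (state window omitted/truncated when `t - v - 1 < 0`). -/
def objFull {N u : ℕ} (v : ℕ) (ch : NCFSC X S Y) (src : Source X S Y N u) : ℝ :=
  ∑ t : Fin N,
    condMI (jointP ch src)
      (fun ω : Traj X S Y N =>
        ((fun j : {j : Fin N // (j : ℕ) ≤ (t : ℕ)} => ω.1 j.1),
          fun j : {j : Fin (N + 1) // (j : ℕ) + v ≤ (t : ℕ)} => ω.2.1 j.1))
      (fun ω => ω.2.2 t)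
      (fun ω => fun j : {j : Fin N // (j : ℕ) < (t : ℕ)} => ω.2.2 j.1)

/-- `Σ_{t=1}^N I(X_{t-v}^t, S_{t-v-1}; Y_t | Y^{t-1})` under the joint law
of the source (windows truncated for small `t`; the singleton state window
`S_{t-v-1}` is encoded by the condition `j + v = t - 1` in 0-based time and
is empty for `t ≤ v`). -/
def objWin {N u : ℕ} (v : ℕ) (ch : NCFSC X S Y) (src : Source X S Y N u) : ℝ :=
  ∑ t : Fin N,
    condMI (jointP ch src)
      (fun ω : Traj X S Y N =>
        ((fun j : {j : Fin N // (t : ℕ) ≤ (j : ℕ) + v ∧ (j : ℕ) ≤ (t : ℕ)} => ω.1 j.1),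
          fun j : {j : Fin (N + 1) // (j : ℕ) + v = (t : ℕ)} => ω.2.1 j.1))
      (fun ω => ω.2.2 t)
      (fun ω => fun j : {j : Fin N // (j : ℕ) < (t : ℕ)} => ω.2.2 j.1)

/-- Directed information `I(X^N → Y^N) = Σ_{t=1}^N I(X^t; Y_t | Y^{t-1})`. -/
def directedInfo {N u : ℕ} (ch : NCFSC X S Y) (src : Source X S Y N u) : ℝ :=
  ∑ t : Fin N,
    condMI (jointP ch src)
      (fun ω : Traj X S Y N => fun j : {j : Fin N // (j : ℕ) ≤ (t : ℕ)} => ω.1 j.1)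
      (fun ω => ω.2.2 t)
      (fun ω => fun j : {j : Fin N // (j : ℕ) < (t : ℕ)} => ω.2.2 j.1)

/-- The a posteriori vectors `α_{t-1}(y^{t-u-1})` and `α_{t-1}(ỹ^{t-u-1})`
(at the 1-based time `(t:ℕ)+1`) induced by the two output histories `yh`
and `yh'` coincide: for all window values `(x_{t-v}^{t-1}, s_{t-v-1}^{t-u-1})`
the two a posteriori probabilities agree. -/
def alphaWinEq {N u : ℕ} (v : ℕ) (ch : NCFSC X S Y) (src : Source X S Y N u)
    (t : Fin N) (yh yh' : Fin N → Y) : Prop :=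
  ∀ (xf : Fin N → X) (sf : Fin (N + 1) → S),
    condPr (jointP ch src)
        {ω : Traj X S Y N |
          (∀ j : Fin N, (t : ℕ) ≤ (j : ℕ) + v ∧ (j : ℕ) < (t : ℕ) → ω.1 j = xf j) ∧
            ∀ j : Fin (N + 1), (t : ℕ) ≤ (j : ℕ) + v ∧ (j : ℕ) + u ≤ (t : ℕ) → ω.2.1 j = sf j}
        {ω : Traj X S Y N | ∀ j : Fin N, (j : ℕ) + u + 1 ≤ (t : ℕ) → ω.2.2 j = yh j} =
      condPr (jointP ch src)
        {ω : Traj X S Y N |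
          (∀ j : Fin N, (t : ℕ) ≤ (j : ℕ) + v ∧ (j : ℕ) < (t : ℕ) → ω.1 j = xf j) ∧
            ∀ j : Fin (N + 1), (t : ℕ) ≤ (j : ℕ) + v ∧ (j : ℕ) + u ≤ (t : ℕ) → ω.2.1 j = sf j}
        {ω : Traj X S Y N | ∀ j : Fin N, (j : ℕ) + u + 1 ≤ (t : ℕ) → ω.2.2 j = yh' j}

/-- The set `𝒫'_v(u,u)`: the policy at each time gives the same value on
any two positive-probability output histories inducing the same a
posteriori vector. -/
def AlphaPolicy {N u : ℕ} (v : ℕ) (ch : NCFSC X S Y) (src : Source X S Y N u) : Prop :=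
  ∀ (t : Fin N) (yh yh' : Fin N → Y),
    0 < prE (jointP ch src)
        {ω : Traj X S Y N | ∀ j : Fin N, (j : ℕ) + u + 1 ≤ (t : ℕ) → ω.2.2 j = yh j} →
    0 < prE (jointP ch src)
        {ω : Traj X S Y N | ∀ j : Fin N, (j : ℕ) + u + 1 ≤ (t : ℕ) → ω.2.2 j = yh' j} →
    alphaWinEq v ch src t yh yh' →
    ∀ (xf : Fin N → X) (sf : Fin (N + 1) → S) (a : X),
      src.pol t xf sf yh a = src.pol t xf sf yh' a

open scoped Classical

/-!
Summing the product formula for `jointP` over the later coordinates, last one first, shows that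
the prefix `(X^{t-1}, S_0^{t-u-1}, Y^{t-u-1})` has the truncated product as its law, and that
given such a prefix the next triple `(X_t, S_{t-u}, Y_{t-u})` has law
`π_t(x_t | …) W(y, s_{t-u} | x_{t-u}, s_{t-u-1})`. The event
`{window = (x_{t-v}^{t-1}, s_{t-v-1}^{t-u-1}), Y^{t-u-1} = y^{t-u-1}}` is a union of prefixes
on which this factor is constant, because the policy is `v`-th order Markov and `u ≤ v` puts
`x_{t-u}` and `s_{t-u-1}` inside the window. Splitting `{Y_{t-u} = y, Y^{t-u-1} = y^{t-u-1}}`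
along the values of the extended window `(x_{t-v}^t, s_{t-v-1}^{t-u})` gives the formula.
-/

section Generic

variable {Ω : Type} [Fintype Ω]

theorem prE_empty (p : Ω → ℝ) : prE p ∅ = 0 := by
  simp [prE]

theorem prE_singleton (p : Ω → ℝ) (ρ : Ω) : prE p {ρ} = p ρ := by
  simp [prE, Set.indicator_apply]

theorem prE_eq_sum_fiber {K : Type} [Fintype K] (p : Ω → ℝ) (D : Set Ω) (φ : Ω → K) :
    prE p D = ∑ c : K, prE p (D ∩ {ω | φ ω = c}) := by
  unfold prE
  rw [Finset.sum_comm]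
  refine Finset.sum_congr rfl fun ω _ => ?_
  simp [Set.indicator_apply, ite_and]

theorem prE_inter_eq_mul_of_fiber {K : Type} [Fintype K] (p : Ω → ℝ) (φ : Ω → K)
    {B C : Set Ω} (κ : ℝ) (hB : ∀ ω ρ, φ ω = φ ρ → ρ ∈ B → ω ∈ B)
    (hC : ∀ ρ ∈ B, prE p ({ω | φ ω = φ ρ} ∩ C) = prE p {ω | φ ω = φ ρ} * κ) :
    prE p (B ∩ C) = prE p B * κ := by
  rw [prE_eq_sum_fiber p (B ∩ C) φ, prE_eq_sum_fiber p B φ, Finset.sum_mul]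
  refine Finset.sum_congr rfl fun c _ => ?_
  rw [Set.inter_right_comm]
  by_cases h : ∃ ρ ∈ B, φ ρ = c
  · obtain ⟨ρ, hρ, rfl⟩ := h
    have hfiber : B ∩ {ω | φ ω = φ ρ} = {ω | φ ω = φ ρ} :=
      Set.inter_eq_right.2 fun ω hω => hB ω ρ hω hρ
    rw [hfiber, hC ρ hρ]
  · have hfiber : B ∩ {ω | φ ω = c} = ∅ := by
      ext ω
      simp only [Set.mem_inter_iff, Set.mem_ofPred_eq, Set.mem_empty_iff_false, iff_false]
      exact fun ⟨hω, hc⟩ => h ⟨ω, hω, hc⟩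
    rw [hfiber, Set.empty_inter, prE_empty, zero_mul]

end Generic

theorem fun_ite_eq_iff {ι β : Type*} (p : ι → Prop) [DecidablePred p] (f b g : ι → β) :
    (fun i => if p i then f i else b i) = g ↔ (∀ i, ¬p i → g i = b i) ∧ ∀ i, p i → f i = g i := by
  rw [funext_iff]
  constructor
  · intro h
    exact ⟨fun i hi => by rw [← h i, if_neg hi], fun i hi => by rw [← h i, if_pos hi]⟩
  · rintro ⟨hb, hf⟩ i
    split_ifs with hi
    exacts [hf i hi, (hb i hi).symm]

theorem forall_val_lt_succ_eq_update_iff {α : Type*} {n : ℕ} (i : Fin n) (f g : Fin n → α)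
    (q : α) : (∀ j : Fin n, j.val < (i : ℕ) + 1 → f j = Function.update g i q j) ↔
      (∀ j : Fin n, j.val < (i : ℕ) → f j = g j) ∧ f i = q := by
  constructor
  · intro h
    refine ⟨fun j hj => ?_, by simpa using h i (by omega)⟩
    rw [h j (by omega), Function.update_of_ne (Fin.ne_of_val_ne (by omega))]
  · rintro ⟨hlt, hi⟩ j hj
    rcases eq_or_ne j i with rfl | hji
    · rw [Function.update_self, hi]
    · rw [Function.update_of_ne hji]
      exact hlt j (by have := Fin.val_ne_of_ne hji; omega)

theorem prod_filter_val_lt_succ {M : Type*} [CommMonoid M] {n : ℕ} (i : Fin n) (f : Fin n → M) :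
    ∏ j : Fin n with j.val < (i : ℕ) + 1, f j = (∏ j : Fin n with j.val < (i : ℕ), f j) * f i := by
  have hfilter : Finset.univ.filter (fun j : Fin n => j.val < (i : ℕ) + 1)
      = insert i (Finset.univ.filter fun j : Fin n => j.val < (i : ℕ)) := by
    ext j
    simp only [Finset.mem_filter, Finset.mem_univ, true_and, Finset.mem_insert, Fin.ext_iff]
    omega
  rw [hfilter, Finset.prod_insert (by simp), mul_comm]

variable {X S Y : Type} {N u : ℕ}

namespace Source

variable [Fintype X] [Fintype S] [Fintype Y] (src : Source X S Y N u) (x : Fin N → X) (s : Fin (N + 1) → S) (y : Fin N → Y)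

theorem pol_update_input (i j : Fin N) (hij : (i : ℕ) ≤ j) (q : X) :
    src.pol i (Function.update x j q) s y = src.pol i x s y :=
  src.causal i _ _ _ _ _ _ (fun l hl => Function.update_of_ne (Fin.ne_of_val_ne (by omega)) _ _)
    (fun _ _ => rfl) (fun _ _ => rfl)

theorem pol_update_state (i : Fin N) (j : Fin (N + 1)) (hij : (i : ℕ) < j + u) (r : S) :
    src.pol i x (Function.update s j r) y = src.pol i x s y :=
  src.causal i _ _ _ _ _ _ (fun _ _ => rfl)
    (fun l hl => Function.update_of_ne (Fin.ne_of_val_ne (by omega)) _ _) (fun _ _ => rfl)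

theorem pol_update_output (i j : Fin N) (hij : (i : ℕ) < j + u + 1) (b : Y) :
    src.pol i x s (Function.update y j b) = src.pol i x s y :=
  src.causal i _ _ _ _ _ _ (fun _ _ => rfl) (fun _ _ => rfl)
    (fun l hl => Function.update_of_ne (Fin.ne_of_val_ne (by omega)) _ _)

end Source

theorem NCFSC.sum_W [Fintype S] [Fintype Y] (ch : NCFSC X S Y) (x : X) (s : S) :
    ∑ s' : S, ∑ y : Y, ch.W y s' x s = 1 := by
  simp only [NCFSC.W, ← Finset.sum_mul, ch.P_sum, one_mul, ch.Q_sum]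

/-- The coordinates `(X_1^a, S_0^c, Y_1^c)` of a trajectory. -/
def prefixRestrict (a c : ℕ) (ω : Traj X S Y N) :
    ({j : Fin N | j.val < a} → X) × ({j : Fin (N + 1) | j.val < c + 1} → S) ×
      ({j : Fin N | j.val < c} → Y) :=
  (Set.domRestrict _ ω.1, Set.domRestrict _ ω.2.1, Set.domRestrict _ ω.2.2)

def prefixEvent (a c : ℕ) (ρ : Traj X S Y N) : Set (Traj X S Y N) :=
  {ω | prefixRestrict a c ω = prefixRestrict a c ρ}

theorem mem_prefixEvent {a c : ℕ} {ρ ω : Traj X S Y N} :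
    ω ∈ prefixEvent a c ρ ↔ (∀ j : Fin N, j.val < a → ω.1 j = ρ.1 j) ∧
      (∀ j : Fin (N + 1), j.val < c + 1 → ω.2.1 j = ρ.2.1 j) ∧
        ∀ j : Fin N, j.val < c → ω.2.2 j = ρ.2.2 j := by
  simp only [prefixEvent, prefixRestrict, Set.mem_ofPred_eq, Prod.mk.injEq,
    Set.domRestrict_eq_domRestrict_iff]
  rfl

theorem prefixEvent_succ_input (c : ℕ) (i : Fin N) (ρ : Traj X S Y N) (q : X) :
    prefixEvent (i + 1) c (Function.update ρ.1 i q, ρ.2) =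
      prefixEvent i c ρ ∩ {ω | ω.1 i = q} := by
  ext ω
  simp only [Set.mem_inter_iff, mem_prefixEvent, Set.mem_ofPred_eq,
    forall_val_lt_succ_eq_update_iff]
  tauto

theorem prefixEvent_succ_stateOutput (a : ℕ) (i : Fin N) (ρ : Traj X S Y N) (r : S) (b : Y) :
    prefixEvent a (i + 1) (ρ.1, Function.update ρ.2.1 i.succ r, Function.update ρ.2.2 i b) =
      prefixEvent a i ρ ∩ {ω | ω.2.1 i.succ = r ∧ ω.2.2 i = b} := by
  have hstate := forall_val_lt_succ_eq_update_iff (α := S) i.succ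
  simp only [Fin.val_succ] at hstate
  ext ω
  simp only [Set.mem_inter_iff, mem_prefixEvent, Set.mem_ofPred_eq,
    forall_val_lt_succ_eq_update_iff, hstate]
  tauto

section PrefixWeight

variable [Fintype X] [Fintype S] [Fintype Y] (ch : NCFSC X S Y) (src : Source X S Y N u)

def prefixWeight (a c : ℕ) (ρ : Traj X S Y N) : ℝ :=
  ch.init (ρ.2.1 0) * (∏ i : Fin N with i.val < a, src.pol i ρ.1 ρ.2.1 ρ.2.2 (ρ.1 i)) *
    ∏ i : Fin N with i.val < c, ch.W (ρ.2.2 i) (ρ.2.1 i.succ) (ρ.1 i) (ρ.2.1 i.castSucc)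

theorem prefixWeight_succ_input {c : ℕ} (i : Fin N) (hc : c ≤ i) (ρ : Traj X S Y N) (q : X) :
    prefixWeight ch src (i + 1) c (Function.update ρ.1 i q, ρ.2) =
      prefixWeight ch src i c ρ * src.pol i ρ.1 ρ.2.1 ρ.2.2 q := by
  have hpol : ∀ j ∈ Finset.univ.filter (fun j : Fin N => j.val < (i : ℕ)),
      src.pol j (Function.update ρ.1 i q) ρ.2.1 ρ.2.2 (Function.update ρ.1 i q j) =
        src.pol j ρ.1 ρ.2.1 ρ.2.2 (ρ.1 j) := fun j hj => by
    have hj : j.val < i := (Finset.mem_filter.1 hj).2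
    rw [Function.update_of_ne (Fin.ne_of_val_ne hj.ne), src.pol_update_input _ _ _ _ _ hj.le]
  have hW : ∀ j ∈ Finset.univ.filter (fun j : Fin N => j.val < c),
      ch.W (ρ.2.2 j) (ρ.2.1 j.succ) (Function.update ρ.1 i q j) (ρ.2.1 j.castSucc) =
        ch.W (ρ.2.2 j) (ρ.2.1 j.succ) (ρ.1 j) (ρ.2.1 j.castSucc) := fun j hj => by
    have hj : j.val < c := (Finset.mem_filter.1 hj).2
    rw [Function.update_of_ne (Fin.ne_of_val_ne (by omega))]
  simp only [prefixWeight]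
  rw [prod_filter_val_lt_succ, Finset.prod_congr rfl hpol, Finset.prod_congr rfl hW,
    Function.update_self, src.pol_update_input _ _ _ _ _ le_rfl]
  ring

theorem prefixWeight_succ_stateOutput {a : ℕ} (i : Fin N) (hai : a ≤ i + u + 1)
    (ρ : Traj X S Y N) (r : S) (b : Y) :
    prefixWeight ch src a (i + 1)
        (ρ.1, Function.update ρ.2.1 i.succ r, Function.update ρ.2.2 i b) =
      prefixWeight ch src a i ρ * ch.W b r (ρ.1 i) (ρ.2.1 i.castSucc) := by
  have hpol : ∀ j ∈ Finset.univ.filter (fun j : Fin N => j.val < a),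
      src.pol j ρ.1 (Function.update ρ.2.1 i.succ r) (Function.update ρ.2.2 i b) (ρ.1 j) =
        src.pol j ρ.1 ρ.2.1 ρ.2.2 (ρ.1 j) := fun j hj => by
    have hj : j.val < a := (Finset.mem_filter.1 hj).2
    rw [src.pol_update_state _ _ _ _ _ (by rw [Fin.val_succ]; omega),
      src.pol_update_output _ _ _ _ _ (by omega)]
  have hW : ∀ j ∈ Finset.univ.filter (fun j : Fin N => j.val < (i : ℕ)),
      ch.W (Function.update ρ.2.2 i b j) (Function.update ρ.2.1 i.succ r j.succ) (ρ.1 j)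
          (Function.update ρ.2.1 i.succ r j.castSucc) =
        ch.W (ρ.2.2 j) (ρ.2.1 j.succ) (ρ.1 j) (ρ.2.1 j.castSucc) := fun j hj => by
    have hj : j.val < i := (Finset.mem_filter.1 hj).2
    rw [Function.update_of_ne (Fin.ne_of_val_ne hj.ne),
      Function.update_of_ne (Fin.ne_of_val_ne (by simp only [Fin.val_succ]; omega)),
      Function.update_of_ne (Fin.ne_of_val_ne (by rw [Fin.val_succ, Fin.val_castSucc]; omega))]
  simp only [prefixWeight]
  rw [prod_filter_val_lt_succ, Finset.prod_congr rfl hpol, Finset.prod_congr rfl hW,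
    Function.update_self, Function.update_self,
    Function.update_of_ne (Fin.ne_of_val_ne (by simp) : i.castSucc ≠ i.succ),
    Function.update_of_ne (Fin.ne_of_val_ne (by simp) : (0 : Fin (N + 1)) ≠ i.succ)]
  ring

end PrefixWeight

theorem prefixEvent_of_le {a c : ℕ} (ha : N ≤ a) (hc : N ≤ c) (ρ : Traj X S Y N) :
    prefixEvent a c ρ = {ρ} := by
  ext ω
  simp only [mem_prefixEvent, Set.mem_singleton_iff, Prod.ext_iff, funext_iff]
  exact ⟨fun ⟨hx, hs, hy⟩ => ⟨fun j => hx j (by omega), fun j => hs j (by omega),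
      fun j => hy j (by omega)⟩,
    fun ⟨hx, hs, hy⟩ => ⟨fun j _ => hx j, fun j _ => hs j, fun j _ => hy j⟩⟩

section Marginal

variable [Fintype X] [Fintype S] [Fintype Y] (ch : NCFSC X S Y) (src : Source X S Y N u)

theorem jointP_eq_prefixWeight {a c : ℕ} (ha : N ≤ a) (hc : N ≤ c) (ρ : Traj X S Y N) :
    jointP ch src ρ = prefixWeight ch src a c ρ := by
  rw [prefixWeight, Finset.filter_true_of_mem fun i _ => by omega,
    Finset.filter_true_of_mem fun i _ => by omega, mul_assoc, ← Finset.prod_mul_distrib]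
  rfl

/-- The constraint `c ≤ a ≤ c + u + 1` keeps every factor of the prefix weight a function of the
prefix. -/
theorem prE_prefixEvent {a c : ℕ} (hca : c ≤ a) (hac : a ≤ c + u + 1) (ρ : Traj X S Y N) :
    prE (jointP ch src) (prefixEvent a c ρ) = prefixWeight ch src a c ρ := by
  induction hm : (N - a) + (N - c) using Nat.strong_induction_on generalizing a c ρ with
  | _ m ih =>
  by_cases hx : a < N ∧ a < c + u + 1
  · obtain ⟨i, rfl⟩ : ∃ i : Fin N, (i : ℕ) = a := ⟨⟨a, hx.1⟩, rfl⟩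
    rw [prE_eq_sum_fiber _ _ fun ω : Traj X S Y N => ω.1 i]
    calc ∑ q : X, prE (jointP ch src) (prefixEvent i c ρ ∩ {ω | ω.1 i = q})
        = ∑ q : X, prefixWeight ch src (i + 1) c (Function.update ρ.1 i q, ρ.2) := by
          refine Finset.sum_congr rfl fun q _ => ?_
          rw [← prefixEvent_succ_input, ih _ (by omega) (by omega) (by omega) _ rfl]
      _ = prefixWeight ch src i c ρ := by
          simp_rw [prefixWeight_succ_input ch src i hca, ← Finset.mul_sum, src.sum_one, mul_one]
  by_cases hs : c < N ∧ c < a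
  · obtain ⟨i, rfl⟩ : ∃ i : Fin N, (i : ℕ) = c := ⟨⟨c, hs.1⟩, rfl⟩
    rw [prE_eq_sum_fiber _ _ fun ω : Traj X S Y N => (ω.2.1 i.succ, ω.2.2 i),
      Fintype.sum_prod_type]
    calc ∑ r : S, ∑ b : Y,
          prE (jointP ch src) (prefixEvent a i ρ ∩ {ω | (ω.2.1 i.succ, ω.2.2 i) = (r, b)})
        = ∑ r : S, ∑ b : Y, prefixWeight ch src a (i + 1)
            (ρ.1, Function.update ρ.2.1 i.succ r, Function.update ρ.2.2 i b) := by
          refine Finset.sum_congr rfl fun r _ => Finset.sum_congr rfl fun b _ => ?_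
          simp only [Prod.mk.injEq]
          rw [← prefixEvent_succ_stateOutput, ih _ (by omega) (by omega) (by omega) _ rfl]
      _ = prefixWeight ch src a i ρ := by
          simp_rw [prefixWeight_succ_stateOutput ch src i (by omega), ← Finset.mul_sum,
            ch.sum_W, mul_one]
  rw [prefixEvent_of_le (by omega) (by omega), prE_singleton,
    jointP_eq_prefixWeight ch src (by omega : N ≤ a) (by omega : N ≤ c)]

theorem prE_prefixEvent_inter_step (t k : Fin N) (hkt : (k : ℕ) + u = t) (ρ : Traj X S Y N)
    (a : X) (r : S) (b : Y) :
    prE (jointP ch src) (prefixEvent t k ρ ∩ {ω | ω.1 t = a ∧ ω.2.1 k.succ = r ∧ ω.2.2 k = b}) =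
      prE (jointP ch src) (prefixEvent t k ρ) *
        (src.pol t ρ.1 ρ.2.1 ρ.2.2 a *
          ch.W b r (Function.update ρ.1 t a k) (ρ.2.1 k.castSucc)) := by
  have hstep := prefixEvent_succ_stateOutput (t + 1) k (Function.update ρ.1 t a, ρ.2) r b
  rw [prefixEvent_succ_input] at hstep
  have hset : prefixEvent t k ρ ∩ {ω | ω.1 t = a ∧ ω.2.1 k.succ = r ∧ ω.2.2 k = b} =
      prefixEvent (t + 1) (k + 1)
        (Function.update ρ.1 t a, Function.update ρ.2.1 k.succ r, Function.update ρ.2.2 k b) := by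
    rw [hstep, Set.inter_assoc]
    rfl
  rw [hset, prE_prefixEvent ch src (by omega) (by omega),
    prE_prefixEvent ch src (by omega) (by omega),
    prefixWeight_succ_stateOutput ch src k (by omega) (Function.update ρ.1 t a, ρ.2),
    prefixWeight_succ_input ch src t (by omega)]
  ring

end Marginal

theorem forall_inputWindow_iff {α : Type*} (v : ℕ) (t : Fin N) (f g : Fin N → α) :
    (∀ j : Fin N, (t : ℕ) ≤ j + v ∧ (j : ℕ) ≤ t → f j = g j) ↔
      f t = g t ∧ ∀ j : Fin N, (t : ℕ) ≤ j + v ∧ (j : ℕ) < t → f j = g j := by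
  rw [← forall_eq_or_imp (P := fun j => f j = g j)]
  exact forall_congr' fun j => imp_congr_left (by rw [Fin.ext_iff]; omega)

theorem forall_stateWindow_iff {α : Type*} {v : ℕ} (huv : u ≤ v) (t k : Fin N)
    (hkt : (k : ℕ) + u = t) (f g : Fin (N + 1) → α) :
    (∀ j : Fin (N + 1), (t : ℕ) ≤ j + v ∧ (j : ℕ) + u ≤ t + 1 → f j = g j) ↔
      f k.succ = g k.succ ∧ ∀ j : Fin (N + 1), (t : ℕ) ≤ j + v ∧ (j : ℕ) + u ≤ t → f j = g j := by
  rw [← forall_eq_or_imp (P := fun j => f j = g j)]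
  exact forall_congr' fun j => imp_congr_left (by rw [Fin.ext_iff, Fin.val_succ]; omega)

def outputHistoryEvent (u : ℕ) (t : Fin N) (yh : Fin N → Y) : Set (Traj X S Y N) :=
  {ω | ∀ j : Fin N, (j : ℕ) + u + 1 ≤ t → ω.2.2 j = yh j}

def windowEvent (u v : ℕ) (t : Fin N) (xg : Fin N → X) (sg : Fin (N + 1) → S) :
    Set (Traj X S Y N) :=
  {ω | (∀ j : Fin N, (t : ℕ) ≤ j + v ∧ (j : ℕ) < t → ω.1 j = xg j) ∧
    ∀ j : Fin (N + 1), (t : ℕ) ≤ j + v ∧ (j : ℕ) + u ≤ t → ω.2.1 j = sg j}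

section Markov

variable [Fintype X] [Fintype S] [Fintype Y] (ch : NCFSC X S Y) (src : Source X S Y N u)

theorem prE_window_inter_step {v : ℕ} (huv : u ≤ v) (hM : IsMarkov v src) (t k : Fin N)
    (hkt : (k : ℕ) + u = t) (yh : Fin N → Y) (xg : Fin N → X) (sg : Fin (N + 1) → S) (y : Y) :
    prE (jointP ch src) (windowEvent u v t xg sg ∩ outputHistoryEvent u t yh ∩
        {ω | ω.1 t = xg t ∧ ω.2.1 k.succ = sg k.succ ∧ ω.2.2 k = y}) =
      prE (jointP ch src) (windowEvent u v t xg sg ∩ outputHistoryEvent u t yh) *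
        (src.pol t xg sg yh (xg t) * ch.W y (sg k.succ) (xg k) (sg k.castSucc)) := by
  refine prE_inter_eq_mul_of_fiber _ (prefixRestrict t k) _ ?_ fun ρ ⟨⟨hx, hs⟩, hy⟩ => ?_
  · rintro ω ρ hωρ ⟨⟨hx, hs⟩, hy⟩
    obtain ⟨hωx, hωs, hωy⟩ := mem_prefixEvent.1 hωρ
    exact ⟨⟨fun j hj => (hωx j (by omega)).trans (hx j hj),
      fun j hj => (hωs j (by omega)).trans (hs j hj)⟩,
      fun j hj => (hωy j (by omega)).trans (hy j hj)⟩
  have hxk : Function.update ρ.1 t (xg t) k = xg k := by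
    rcases eq_or_ne k t with rfl | hne
    · exact Function.update_self _ _ _
    · rw [Function.update_of_ne hne]
      exact hx k ⟨by omega, by have := Fin.val_ne_of_ne hne; omega⟩
  exact (prE_prefixEvent_inter_step ch src t k hkt ρ _ _ _).trans <| by
    rw [hM t ρ.1 xg ρ.2.1 sg ρ.2.2 yh hx hs hy, hxk,
      hs k.castSucc ⟨by rw [Fin.val_castSucc]; omega, by rw [Fin.val_castSucc]; omega⟩]
    rfl

theorem prE_output_inter_history_eq_sum_window {v : ℕ} (huv : u ≤ v) (hM : IsMarkov v src)
    (t k : Fin N) (hkt : (k : ℕ) + u = t) (yh : Fin N → Y) (xf : Fin N → X)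
    (sf : Fin (N + 1) → S) (y : Y) :
    prE (jointP ch src) ({ω | ω.2.2 k = y} ∩ outputHistoryEvent u t yh) =
      ∑ xg : Fin N → X, ∑ sg : Fin (N + 1) → S,
        if (∀ j : Fin N, ¬((t : ℕ) ≤ j + v ∧ (j : ℕ) ≤ t) → xg j = xf j) ∧
            ∀ j : Fin (N + 1), ¬((t : ℕ) ≤ j + v ∧ (j : ℕ) + u ≤ t + 1) → sg j = sf j then
          prE (jointP ch src) (windowEvent u v t xg sg ∩ outputHistoryEvent u t yh) *
            (src.pol t xg sg yh (xg t) * ch.W y (sg k.succ) (xg k) (sg k.castSucc))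
        else 0 := by
  rw [prE_eq_sum_fiber _ _ fun ω : Traj X S Y N =>
    (fun j : Fin N => if (t : ℕ) ≤ j + v ∧ (j : ℕ) ≤ t then ω.1 j else xf j,
      fun j : Fin (N + 1) => if (t : ℕ) ≤ j + v ∧ (j : ℕ) + u ≤ t + 1 then ω.2.1 j else sf j),
    Fintype.sum_prod_type]
  refine Finset.sum_congr rfl fun xg _ => Finset.sum_congr rfl fun sg _ => ?_
  simp only [Prod.mk.injEq, fun_ite_eq_iff, forall_inputWindow_iff,
    forall_stateWindow_iff huv t k hkt]
  split_ifs with hbase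
  · rw [← prE_window_inter_step ch src huv hM t k hkt]
    congr 1
    ext ω
    simp only [windowEvent, outputHistoryEvent, Set.mem_inter_iff, Set.mem_ofPred_eq]
    tauto
  · convert prE_empty (jointP ch src)
    ext ω
    simp only [Set.mem_inter_iff, Set.mem_ofPred_eq, Set.mem_empty_iff_false, iff_false]
    tauto

end Markov

/-- The sums over the windows `x_{t-v}^t`, `s_{t-v-1}^{t-u}` are sums over full functions
agreeing with the base point `(xf, sf)` off these windows. -/
theorem statement11 {X S Y : Type} [Fintype X] [Fintype S] [Fintype Y] {N u : ℕ}
    (ch : NCFSC X S Y) (src : Source X S Y N u) (v : ℕ) (huv : u ≤ v)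
    (hM : IsMarkov v src)
    (t : Fin N) (htu : u ≤ (t : ℕ)) (yh : Fin N → Y)
    (xf : Fin N → X) (sf : Fin (N + 1) → S) (y : Y) :
    condPr (jointP ch src)
        {ω : Traj X S Y N | ω.2.2 ⟨(t : ℕ) - u, by have := t.isLt; omega⟩ = y}
        {ω : Traj X S Y N | ∀ j : Fin N, (j : ℕ) + u + 1 ≤ (t : ℕ) → ω.2.2 j = yh j} =
      ∑ xg : Fin N → X, ∑ sg : Fin (N + 1) → S,
        if (∀ j : Fin N, ¬((t : ℕ) ≤ (j : ℕ) + v ∧ (j : ℕ) ≤ (t : ℕ)) → xg j = xf j) ∧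
            (∀ j : Fin (N + 1),
              ¬((t : ℕ) ≤ (j : ℕ) + v ∧ (j : ℕ) + u ≤ (t : ℕ) + 1) → sg j = sf j) then
          condPr (jointP ch src)
              {ω : Traj X S Y N |
                (∀ j : Fin N, (t : ℕ) ≤ (j : ℕ) + v ∧ (j : ℕ) < (t : ℕ) → ω.1 j = xg j) ∧
                  ∀ j : Fin (N + 1),
                    (t : ℕ) ≤ (j : ℕ) + v ∧ (j : ℕ) + u ≤ (t : ℕ) → ω.2.1 j = sg j}
              {ω : Traj X S Y N | ∀ j : Fin N, (j : ℕ) + u + 1 ≤ (t : ℕ) → ω.2.2 j = yh j} *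
            src.pol t xg sg yh (xg t) *
            ch.W y (sg ⟨(t : ℕ) + 1 - u, by have := t.isLt; omega⟩)
              (xg ⟨(t : ℕ) - u, by have := t.isLt; omega⟩)
              (sg ⟨(t : ℕ) - u, by have := t.isLt; omega⟩)
        else 0 := by
  have hk : (t : ℕ) - u < N := by omega
  have hkt : (t : ℕ) - u + u = t := by omega
  have hsucc : (⟨(t : ℕ) + 1 - u, by omega⟩ : Fin (N + 1)) = Fin.succ ⟨(t : ℕ) - u, hk⟩ :=
    Fin.ext (by simp only [Fin.val_succ]; omega)
  have hnum := prE_output_inter_history_eq_sum_window ch src huv hM t ⟨_, hk⟩ hkt yh xf sf y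
  unfold outputHistoryEvent windowEvent at hnum
  unfold condPr
  rw [hnum, Finset.sum_div]
  refine Finset.sum_congr rfl fun xg _ => ?_
  rw [Finset.sum_div]
  refine Finset.sum_congr rfl fun sg _ => ?_
  rw [hsucc]
  split_ifs
  · simp only [div_mul_eq_mul_div, mul_assoc]
    rfl
  · exact zero_div _

end FSCPaper
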